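/- arXiv:1604.02642 — 6 statements merged into one kernel-verified Lean document; each statement's English description precedes it below -/
import Mathlib

section
/- Suppose Y and C are independent real-valued random variables. Then for every y ∈ ℝ with ℙ(Q ≥ y) > 0, the cumulative hazard of Y computed from the observable censored-data quantities coincides with the true cumulative hazard: ∫_{(-∞,y]} (ℙ(Q ≥ s))⁻¹ dν₁(s) = ∫_{(-∞,y]} (ℙ(Y ≥ s))⁻¹ dμ_Y(s). (This is the identity Λ = Λ^cens of Proposition 1 in the no-covariate case, applied within one treatment arm.) -/
/-! Under independence, conditionally on `Y = t` the observation is uncensored with probability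
`G t = ℙ(C ≥ t)`, so `ν₁` has density `G` with respect to `μ_Y`; independence also factors
`ℙ(Q ≥ s) = ℙ(Y ≥ s) G s`. The integrand of the censored hazard is thus `G / (ℙ(Y ≥ ·) G)`, and
`G` cancels on `(-∞, y]` because `ℙ(Q ≥ s) ≥ ℙ(Q ≥ y) > 0` there. -/

open MeasureTheory ProbabilityTheory Set

open scoped ENNReal

theorem ENNReal.mul_inv_mul_cancel_right {a b : ℝ≥0∞} (hab : a * b ≠ 0) (ha : a ≠ ∞)
    (hb : b ≠ ∞) : b * (a * b)⁻¹ = a⁻¹ := by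
  rw [ENNReal.mul_inv (Or.inr hb) (Or.inl ha), mul_left_comm,
    ENNReal.mul_inv_cancel (right_ne_zero_of_mul hab) hb, mul_one]

namespace ProbabilityTheory

variable {Ω α : Type*} [MeasurableSpace Ω] {P : Measure Ω}
  [LinearOrder α] [TopologicalSpace α] [OrderClosedTopology α] [MeasurableSpace α] [BorelSpace α]

theorem measurable_measure_setOf_le (X : Ω → α) : Measurable fun s => P {ω | s ≤ X ω} :=
  Antitone.measurable fun _ _ hst => measure_mono fun _ hω => le_trans hst hω

theorem IndepFun.measure_setOf_le_min {Y C : Ω → α} (h : IndepFun Y C P) (s : α) :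
    P {ω | s ≤ min (Y ω) (C ω)} = P {ω | s ≤ Y ω} * P {ω | s ≤ C ω} := by
  simp_rw [le_min_iff]
  exact h.measure_inter_preimage_eq_mul _ _ measurableSet_Ici measurableSet_Ici

theorem map_min_restrict_setOf_le_eq_map [SecondCountableTopology α] {Y C : Ω → α}
    (hY : Measurable Y) (hC : Measurable C) :
    (P.restrict {ω | Y ω ≤ C ω}).map (fun ω => min (Y ω) (C ω))
      = (P.restrict {ω | Y ω ≤ C ω}).map Y :=
  Measure.map_congr <| (ae_restrict_mem (measurableSet_le hY hC)).mono fun _ hω => min_eq_left hω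

theorem IndepFun.measure_preimage_eq_lintegral_map [IsFiniteMeasure P] {β γ : Type*}
    [MeasurableSpace β] [MeasurableSpace γ] {X : Ω → β} {Z : Ω → γ} (h : IndepFun X Z P)
    (hX : Measurable X) (hZ : Measurable Z) {S : Set (β × γ)} (hS : MeasurableSet S) :
    P ((fun ω => (X ω, Z ω)) ⁻¹' S) = ∫⁻ x, P.map Z (Prod.mk x ⁻¹' S) ∂P.map X := by
  rw [← Measure.map_apply (hX.prodMk hZ) hS,
    (indepFun_iff_map_prod_eq_prod_map_map hX.aemeasurable hZ.aemeasurable).mp h,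
    Measure.prod_apply hS]

theorem IndepFun.map_restrict_setOf_le_eq_withDensity [IsFiniteMeasure P]
    [SecondCountableTopology α] {Y C : Ω → α} (h : IndepFun Y C P)
    (hY : Measurable Y) (hC : Measurable C) :
    (P.restrict {ω | Y ω ≤ C ω}).map Y = (P.map Y).withDensity fun t => P {ω | t ≤ C ω} := by
  ext A hA
  set S : Set (α × α) := {p | p.1 ∈ A ∧ p.1 ≤ p.2}
  have hS : MeasurableSet S := (measurable_fst hA).inter measurableSet_le'
  have hslice (t : α) : P.map C (Prod.mk t ⁻¹' S) = A.indicator (fun t => P {ω | t ≤ C ω}) t := by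
    by_cases ht : t ∈ A
    · rw [indicator_of_mem ht, show {ω | t ≤ C ω} = C ⁻¹' Ici t from rfl,
        ← Measure.map_apply hC measurableSet_Ici]
      congr 1
      ext c
      simp [S, ht]
    · simp [S, ht]
  rw [Measure.map_apply hY hA, Measure.restrict_apply (hY hA), withDensity_apply _ hA,
    ← lintegral_indicator hA, ← funext hslice]
  exact h.measure_preimage_eq_lintegral_map hY hC hS

end ProbabilityTheory

/-- If the latent outcome `Y` and the censoring variable `C` are independent,
then for every `y` with `P(Q ≥ y) > 0` (where `Q = min(Y, C)` is the observed outcome), the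
cumulative hazard of `Y` computed from observable censored-data quantities coincides with the
true cumulative hazard:
`∫_{(-∞,y]} (P(Q ≥ s))⁻¹ dν₁(s) = ∫_{(-∞,y]} (P(Y ≥ s))⁻¹ dμ_Y(s)`,
where `ν₁(A) = P(Q ∈ A, Y ≤ C)` is the uncensored sub-distribution measure and `μ_Y` is the
law of `Y`. -/
theorem cumulative_hazard_identified_from_censored_data
    {Ω : Type*} [MeasurableSpace Ω] (P : Measure Ω) [IsProbabilityMeasure P]
    (Y C : Ω → ℝ) (hY : Measurable Y) (hC : Measurable C)
    (hindep : IndepFun Y C P)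
    (y : ℝ) (hy : 0 < P {ω | y ≤ min (Y ω) (C ω)}) :
    ∫⁻ s in Iic y, (P {ω | s ≤ min (Y ω) (C ω)})⁻¹
        ∂(Measure.map (fun ω => min (Y ω) (C ω)) (P.restrict {ω | Y ω ≤ C ω}))
      = ∫⁻ s in Iic y, (P {ω | s ≤ Y ω})⁻¹ ∂(Measure.map Y P) := by
  have hQ : Measurable fun s => (P {ω | s ≤ min (Y ω) (C ω)})⁻¹ :=
    (measurable_measure_setOf_le _).inv
  rw [map_min_restrict_setOf_le_eq_map hY hC, hindep.map_restrict_setOf_le_eq_withDensity hY hC,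
    restrict_withDensity measurableSet_Iic,
    lintegral_withDensity_eq_lintegral_mul _ (measurable_measure_setOf_le C) hQ]
  refine setLIntegral_congr_fun measurableSet_Iic fun s (hs : s ≤ y) => ?_
  have hpos : P {ω | s ≤ min (Y ω) (C ω)} ≠ 0 :=
    (hy.trans_le (measure_mono fun _ hω => hs.trans hω)).ne'
  rw [hindep.measure_setOf_le_min] at hpos
  rw [Pi.mul_apply, hindep.measure_setOf_le_min]
  exact ENNReal.mul_inv_mul_cancel_right hpos (measure_ne_top _ _) (measure_ne_top _ _)
end

section
/- Let μ be an atomless probability measure on ℝ with distribution function F(y) = μ((-∞, y]). Then for every y ∈ ℝ with μ((y, ∞)) > 0, the cumulative hazard equals minus the log of the survival function: ∫_{(-∞,y]} (μ([s, ∞)))⁻¹ dμ(s) = −log μ((y, ∞)); equivalently, 1 − F(y) = exp(−∫_{(-∞,y]} (1 − F(s))⁻¹ dμ(s)). (This is the continuous-part exponential formula used in the reconstruction step of Proposition 1.) -/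
/-!
The distribution function `F` of an atomless probability measure `μ` is continuous, so it
pushes `μ` forward to the uniform distribution on `(0, 1]`. Since `μ([s, ∞)) = 1 - F(s)`, the
cumulative hazard becomes `∫₀^{F(y)} (1 - t)⁻¹ dt = -log (1 - F(y)) = -log μ((y, ∞))`.
-/

open MeasureTheory Set ProbabilityTheory

namespace ProbabilityTheory

lemma measure_Ioi_eq_ofReal_one_sub_cdf (μ : Measure ℝ) [IsProbabilityMeasure μ] (x : ℝ) :
    μ (Ioi x) = ENNReal.ofReal (1 - cdf μ x) := by
  rw [← compl_Iic, prob_compl_eq_one_sub measurableSet_Iic, ← ofReal_cdf,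
    ENNReal.ofReal_sub _ (cdf_nonneg μ x), ENNReal.ofReal_one]

section Atomless

variable (μ : Measure ℝ) [IsProbabilityMeasure μ] [NullSingletonClass μ]

lemma measure_Ici_eq_ofReal_one_sub_cdf (x : ℝ) :
    μ (Ici x) = ENNReal.ofReal (1 - cdf μ x) := by
  rw [← measure_congr Ioi_ae_eq_Ici, measure_Ioi_eq_ofReal_one_sub_cdf]

lemma continuous_cdf : Continuous (cdf μ) := by
  refine continuous_iff_continuousAt.2 fun x ↦ ?_
  rw [(monotone_cdf μ).continuousAt_iff_leftLim_eq_rightLim, (cdf μ).rightLim_eq]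
  refine le_antisymm ((monotone_cdf μ).leftLim_le le_rfl) ?_
  have h := (cdf μ).measure_singleton x
  rw [measure_cdf, measure_singleton, eq_comm, ENNReal.ofReal_eq_zero, sub_nonpos] at h
  exact h

lemma Ioo_subset_range_cdf : Ioo 0 1 ⊆ range (cdf μ) := fun _ ⟨ht0, ht1⟩ ↦
  mem_range_of_exists_le_of_exists_ge (continuous_cdf μ)
    (((tendsto_cdf_atBot μ).eventually_lt_const ht0).exists.imp fun _ ↦ le_of_lt)
    (((tendsto_cdf_atTop μ).eventually_const_lt ht1).exists.imp fun _ ↦ le_of_lt)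

/-- For `t < 1`, `{F ≤ t}` is the closed half-line below its supremum `a`, and `F a = t` when
`t > 0` by the intermediate value theorem. -/
lemma measure_cdf_preimage_Iic (t : ℝ) :
    μ (cdf μ ⁻¹' Iic t) = ENNReal.ofReal (min t 1) := by
  rcases le_or_gt 1 t with ht1 | ht1
  · rw [min_eq_right ht1, ENNReal.ofReal_one, ← measure_univ (μ := μ)]
    exact congrArg μ (eq_univ_of_forall fun s ↦ (cdf_le_one μ s).trans ht1)
  rw [min_eq_left ht1.le]
  set S := cdf μ ⁻¹' Iic t
  obtain ⟨c, hc⟩ := ((tendsto_cdf_atTop μ).eventually_const_lt ht1).exists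
  have hbdd : BddAbove S :=
    ⟨c, fun s hs ↦ le_of_not_gt fun hcs ↦ (hc.trans_le (monotone_cdf μ hcs.le)).not_ge hs⟩
  rcases S.eq_empty_or_nonempty with hS | hS
  · rw [hS, measure_empty, eq_comm, ENNReal.ofReal_eq_zero]
    refine le_of_not_gt fun ht0 ↦ ?_
    obtain ⟨b, hb⟩ := Ioo_subset_range_cdf μ ⟨ht0, ht1⟩
    exact hS.subset (show b ∈ S from hb.le)
  have hmem : sSup S ∈ S := (isClosed_Iic.preimage (continuous_cdf μ)).csSup_mem hS hbdd
  have hSeq : S = Iic (sSup S) :=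
    Subset.antisymm (fun s hs ↦ le_csSup hbdd hs) fun s hs ↦ (monotone_cdf μ hs).trans hmem
  rw [hSeq, ← ofReal_cdf]
  refine le_antisymm (ENNReal.ofReal_le_ofReal hmem) ?_
  rcases le_or_gt t 0 with ht0 | ht0
  · rw [ENNReal.ofReal_of_nonpos ht0]
    exact bot_le
  obtain ⟨b, hb⟩ := Ioo_subset_range_cdf μ ⟨ht0, ht1⟩
  refine ENNReal.ofReal_le_ofReal (hb ▸ monotone_cdf μ ?_)
  exact le_csSup hbdd (show b ∈ S from hb.le)

lemma map_cdf : μ.map (cdf μ) = volume.restrict (Ioc 0 1) := by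
  have hF : Measurable (cdf μ) := (monotone_cdf μ).measurable
  have : IsProbabilityMeasure (μ.map (cdf μ)) := Measure.isProbabilityMeasure_map hF.aemeasurable
  refine Measure.ext_of_Iic _ _ fun t ↦ ?_
  rw [Measure.map_apply hF measurableSet_Iic, Measure.restrict_apply measurableSet_Iic,
    inter_comm, Ioc_inter_Iic, Real.volume_Ioc, sub_zero, measure_cdf_preimage_Iic, inf_comm]

lemma setLIntegral_Iic_comp_cdf {g : ℝ → ENNReal} (hg : Measurable g) (y : ℝ) :
    ∫⁻ s in Iic y, g (cdf μ s) ∂μ = ∫⁻ t in Ioc 0 (cdf μ y), g t := by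
  have hF : Measurable (cdf μ) := (monotone_cdf μ).measurable
  have hae : Iic y =ᵐ[μ] cdf μ ⁻¹' Iic (cdf μ y) := by
    refine ae_eq_of_subset_of_measure_ge (fun s hs ↦ monotone_cdf μ hs) ?_
      measurableSet_Iic.nullMeasurableSet (measure_ne_top _ _)
    rw [measure_cdf_preimage_Iic, min_eq_left (cdf_le_one μ y), ofReal_cdf]
  rw [setLIntegral_congr hae, ← setLIntegral_map measurableSet_Iic hg hF, map_cdf,
    Measure.restrict_restrict measurableSet_Iic, inter_comm, Ioc_inter_Iic,
    inf_eq_right.2 (cdf_le_one μ y)]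

end Atomless

end ProbabilityTheory

lemma setLIntegral_Ioc_inv_one_sub {c : ℝ} (hc0 : 0 ≤ c) (hc1 : c < 1) :
    ∫⁻ t in Ioc 0 c, (ENNReal.ofReal (1 - t))⁻¹ = ENNReal.ofReal (-Real.log (1 - c)) := by
  have hpos : ∀ t ∈ Ioc 0 c, 0 < 1 - t := fun t ht ↦ by linarith [ht.2]
  have hint : IntegrableOn (fun t : ℝ ↦ (1 - t)⁻¹) (Ioc 0 c) := by
    refine (ContinuousOn.integrableOn_Icc ?_).mono_set Ioc_subset_Icc_self
    exact ContinuousOn.inv₀ (by fun_prop) fun t ht ↦ (sub_pos.2 (ht.2.trans_lt hc1)).ne'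
  calc ∫⁻ t in Ioc 0 c, (ENNReal.ofReal (1 - t))⁻¹
      = ∫⁻ t in Ioc 0 c, ENNReal.ofReal (1 - t)⁻¹ :=
        setLIntegral_congr_fun measurableSet_Ioc fun t ht ↦
          (ENNReal.ofReal_inv_of_pos (hpos t ht)).symm
    _ = ENNReal.ofReal (∫ t in Ioc 0 c, (1 - t)⁻¹) :=
        (ofReal_integral_eq_lintegral_ofReal hint
          ((ae_restrict_iff' measurableSet_Ioc).2 (ae_of_all _ fun t ht ↦
            (inv_pos.2 (hpos t ht)).le))).symm
    _ = ENNReal.ofReal (-Real.log (1 - c)) := by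
        have hne : (0 : ℝ) ∉ uIcc (1 - c) 1 := by
          rw [uIcc_of_le (by linarith)]
          exact fun h ↦ by linarith [h.1]
        rw [← intervalIntegral.integral_of_le hc0,
          intervalIntegral.integral_comp_sub_left (fun x : ℝ ↦ x⁻¹), sub_zero,
          integral_inv hne, one_div, Real.log_inv]

/-- Let `μ` be an atomless Borel probability measure on `ℝ`. Then for every
`y` with `μ((y, ∞)) > 0`, the cumulative hazard equals minus the log of the survival function:
`∫_{(-∞,y]} (μ([s, ∞)))⁻¹ dμ(s) = -log μ((y, ∞))`; equivalently,
`μ((y, ∞)) = exp(-∫_{(-∞,y]} (μ([s, ∞)))⁻¹ dμ(s))`. -/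
theorem cumulative_hazard_eq_neg_log_survival
    (μ : Measure ℝ) [IsProbabilityMeasure μ] [NullSingletonClass μ]
    (y : ℝ) (hy : 0 < μ (Ioi y)) :
    ∫⁻ s in Iic y, (μ (Ici s))⁻¹ ∂μ
        = ENNReal.ofReal (-Real.log (μ (Ioi y)).toReal) ∧
    μ (Ioi y)
        = ENNReal.ofReal (Real.exp (-(∫⁻ s in Iic y, (μ (Ici s))⁻¹ ∂μ).toReal)) := by
  have hsurv := measure_Ioi_eq_ofReal_one_sub_cdf μ y
  have hFy : cdf μ y < 1 := by
    rw [hsurv, ENNReal.ofReal_pos, sub_pos] at hy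
    exact hy
  have hazard :
      ∫⁻ s in Iic y, (μ (Ici s))⁻¹ ∂μ = ENNReal.ofReal (-Real.log (1 - cdf μ y)) := by
    simp_rw [measure_Ici_eq_ofReal_one_sub_cdf μ]
    exact (setLIntegral_Iic_comp_cdf μ (g := fun t ↦ (ENNReal.ofReal (1 - t))⁻¹)
      (by fun_prop) y).trans (setLIntegral_Ioc_inv_one_sub (cdf_nonneg μ y) hFy)
  have hlog_nonneg : 0 ≤ -Real.log (1 - cdf μ y) :=
    neg_nonneg.2 (Real.log_nonpos (by linarith) (by linarith [cdf_nonneg μ y]))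
  rw [hazard, hsurv, ENNReal.toReal_ofReal (by linarith), ENNReal.toReal_ofReal hlog_nonneg,
    neg_neg, Real.exp_log (by linarith)]
  exact ⟨rfl, rfl⟩
end

section
/- Under the LTE assumptions (conditional independence of (T₀, T₁) and Z given σ(X), overlap for e, and monotonicity T₀ ≤ T₁ a.s.), the first-stage weight identifies the proportion of compliers: E[Z·T/e − (1−Z)·T/(1−e)] = ℙ(T₁ > T₀). (This is the identification of κ₁(e) in Example 2.2.) -/
/-!
Write `D` for a binary treatment-assignment indicator (`Z` or `1 - Z`) and `W` for the matching
potential treatment (`T₁` or `T₀`). On `{D = 1}` the realized treatment is `W`, so each term of the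
weight is `D·W/q` with `q` a version of `E[D | σ(X)]`. Conditional independence factorizes
`E[D·W | σ(X)] = E[D | σ(X)]·E[W | σ(X)]`, so pulling out the `σ(X)`-measurable factor `1/q` gives
`E[D·W/q] = E[W]`. Hence the weight has mean `E[T₁] - E[T₀]`, which by monotonicity is
`P(T₀ < T₁)`.
-/

open MeasureTheory ProbabilityTheory

section ZeroOne

variable {Ω : Type*} {f : Ω → ℝ}

lemma indicator_preimage_one_eq_of_zero_or_one (hf : ∀ ω, f ω = 0 ∨ f ω = 1) :
    (f ⁻¹' {1}).indicator (fun _ => (1 : ℝ)) = f := by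
  funext ω
  rcases hf ω with h | h <;> simp [h]

lemma zero_or_one_mul {g : Ω → ℝ} (hf : ∀ ω, f ω = 0 ∨ f ω = 1) (hg : ∀ ω, g ω = 0 ∨ g ω = 1) :
    ∀ ω, f ω * g ω = 0 ∨ f ω * g ω = 1 := fun ω => by
  rcases hf ω with h | h <;> simp [h, hg ω]

variable [MeasurableSpace Ω] {μ : Measure Ω} [IsFiniteMeasure μ]

lemma integrable_of_zero_or_one (hf_meas : Measurable f) (hf : ∀ ω, f ω = 0 ∨ f ω = 1) :
    Integrable f μ := by
  rw [← indicator_preimage_one_eq_of_zero_or_one hf]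
  exact (integrable_const 1).indicator (hf_meas (measurableSet_singleton 1))

lemma integral_sub_integral_eq_measureReal_lt {g : Ω → ℝ} (hf_meas : Measurable f)
    (hg_meas : Measurable g) (hf : ∀ ω, f ω = 0 ∨ f ω = 1) (hg : ∀ ω, g ω = 0 ∨ g ω = 1)
    (hfg : ∀ᵐ ω ∂μ, f ω ≤ g ω) :
    ∫ ω, g ω ∂μ - ∫ ω, f ω ∂μ = μ.real {ω | f ω < g ω} := by
  rw [← integral_sub (integrable_of_zero_or_one hg_meas hg) (integrable_of_zero_or_one hf_meas hf),
    ← integral_indicator_one (measurableSet_lt hf_meas hg_meas)]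
  refine integral_congr_ae ?_
  filter_upwards [hfg] with ω hω
  rcases hf ω with h | h <;> rcases hg ω with h' | h' <;> simp [h, h'] at hω ⊢
  linarith

end ZeroOne

lemma MeasureTheory.Integrable.div_of_le_ae {α : Type*} [MeasurableSpace α] {μ : Measure α}
    {f q : α → ℝ} (hf : Integrable f μ) (hq : AEStronglyMeasurable q μ) {ε : ℝ} (hε : 0 < ε)
    (hqε : ∀ᵐ x ∂μ, ε ≤ q x) : Integrable (fun x => f x / q x) μ := by
  simp_rw [div_eq_inv_mul]
  refine hf.bdd_mul (c := ε⁻¹) hq.aemeasurable.inv.aestronglyMeasurable ?_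
  filter_upwards [hqε] with x hx
  rw [norm_inv, Real.norm_of_nonneg (hε.trans_le hx).le]
  exact inv_anti₀ hε hx

lemma condExp_const_sub {α : Type*} {m mα : MeasurableSpace α} {μ : Measure α} [IsFiniteMeasure μ]
    (hm : m ≤ mα) (c : ℝ) {f : α → ℝ} (hf : Integrable f μ) :
    μ[fun x => c - f x | m] =ᵐ[μ] fun x => c - μ[f | m] x := by
  have h := condExp_sub (integrable_const c) hf m
  rwa [condExp_const hm] at h

section Weighting

variable {Ω : Type*} {m mΩ : MeasurableSpace Ω} {P : Measure Ω} [IsFiniteMeasure P]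

lemma integral_indicator_inter_div_condExp (hm : m ≤ mΩ) {s t : Set Ω}
    (hs : MeasurableSet s) (ht : MeasurableSet t)
    (hst : P⟦s ∩ t | m⟧ =ᵐ[P] fun ω => (P⟦s | m⟧) ω * (P⟦t | m⟧) ω)
    {ε : ℝ} (hε : 0 < ε) (htε : ∀ᵐ ω ∂P, ε ≤ (P⟦t | m⟧) ω) :
    ∫ ω, (s ∩ t).indicator (fun _ => (1 : ℝ)) ω / (P⟦t | m⟧) ω ∂P = P.real s := by
  set Q := P⟦t | m⟧
  have hQinv_meas : StronglyMeasurable[m] fun ω => (Q ω)⁻¹ :=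
    stronglyMeasurable_condExp.measurable.inv.stronglyMeasurable
  have hQinv_le : ∀ᵐ ω ∂P, ‖(Q ω)⁻¹‖ ≤ ε⁻¹ := by
    filter_upwards [htε] with ω hω
    rw [norm_inv, Real.norm_of_nonneg (hε.trans_le hω).le]
    exact inv_anti₀ hε hω
  have hpull : P[(fun ω => (Q ω)⁻¹) * (s ∩ t).indicator (fun _ => (1 : ℝ)) | m]
      =ᵐ[P] (fun ω => (Q ω)⁻¹) * P⟦s ∩ t | m⟧ :=
    condExp_stronglyMeasurable_mul_of_bound hm hQinv_meas
      ((integrable_const 1).indicator (hs.inter ht)) ε⁻¹ hQinv_le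
  calc ∫ ω, (s ∩ t).indicator (fun _ => (1 : ℝ)) ω / Q ω ∂P
      = ∫ ω, ((fun ω => (Q ω)⁻¹) * (s ∩ t).indicator (fun _ => (1 : ℝ))) ω ∂P := by
        simp only [Pi.mul_apply, div_eq_inv_mul]
    _ = ∫ ω, P[(fun ω => (Q ω)⁻¹) * (s ∩ t).indicator (fun _ => (1 : ℝ)) | m] ω ∂P :=
        (integral_condExp hm).symm
    _ = ∫ ω, (P⟦s | m⟧) ω ∂P := by
        refine integral_congr_ae ?_
        filter_upwards [hpull, hst, htε] with ω hpull hst hω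
        have hQ : Q ω ≠ 0 := (hε.trans_le hω).ne'
        rw [hpull, Pi.mul_apply, hst]
        field_simp
    _ = P.real s := (integral_condExp hm).trans (integral_indicator_one hs)

lemma integrable_mul_div_of_zero_or_one {D W q : Ω → ℝ} (hW : Measurable W)
    (hD : Measurable D) (hWbin : ∀ ω, W ω = 0 ∨ W ω = 1) (hDbin : ∀ ω, D ω = 0 ∨ D ω = 1)
    (hq : q =ᵐ[P] P[D | m]) {ε : ℝ} (hε : 0 < ε) (hqε : ∀ᵐ ω ∂P, ε ≤ q ω) :
    Integrable (fun ω => D ω * W ω / q ω) P :=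
  (integrable_of_zero_or_one (hD.mul hW) (zero_or_one_mul hDbin hWbin)).div_of_le_ae
    (integrable_condExp.1.congr hq.symm) hε hqε

variable [StandardBorelSpace Ω] {hm : m ≤ mΩ}

theorem integral_mul_div_condExp_eq_of_condIndepFun {D W q : Ω → ℝ}
    (hWD : CondIndepFun m hm W D P) (hW : Measurable W) (hD : Measurable D)
    (hWbin : ∀ ω, W ω = 0 ∨ W ω = 1) (hDbin : ∀ ω, D ω = 0 ∨ D ω = 1)
    (hq : q =ᵐ[P] P[D | m]) {ε : ℝ} (hε : 0 < ε) (hqε : ∀ᵐ ω ∂P, ε ≤ q ω) :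
    ∫ ω, D ω * W ω / q ω ∂P = ∫ ω, W ω ∂P := by
  have hs := hW (measurableSet_singleton 1)
  have ht := hD (measurableSet_singleton 1)
  have hDW : ∀ ω, D ω * W ω = (W ⁻¹' {1} ∩ D ⁻¹' {1}).indicator (fun _ => (1 : ℝ)) ω := by
    intro ω
    rcases hWbin ω with hW | hW <;> rcases hDbin ω with hD | hD <;> simp [hW, hD]
  have hq' : q =ᵐ[P] P⟦D ⁻¹' {1} | m⟧ := by
    rwa [indicator_preimage_one_eq_of_zero_or_one hDbin]
  have hfac := (condIndepFun_iff_condExp_inter_preimage_eq_mul hW hD).mp hWD {1} {1}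
    (measurableSet_singleton 1) (measurableSet_singleton 1)
  calc ∫ ω, D ω * W ω / q ω ∂P
      = ∫ ω, (W ⁻¹' {1} ∩ D ⁻¹' {1}).indicator (fun _ => (1 : ℝ)) ω / (P⟦D ⁻¹' {1} | m⟧) ω ∂P :=
        by
        refine integral_congr_ae ?_
        filter_upwards [hq'] with ω hω
        rw [hDW, hω]
    _ = P.real (W ⁻¹' {1}) :=
        integral_indicator_inter_div_condExp hm hs ht hfac hε (by
          filter_upwards [hq', hqε] with ω hω hωε
          rwa [← hω])
    _ = ∫ ω, (W ⁻¹' {1}).indicator (fun _ => (1 : ℝ)) ω ∂P := (integral_indicator_one hs).symm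
    _ = ∫ ω, W ω ∂P := by rw [indicator_preimage_one_eq_of_zero_or_one hWbin]

end Weighting

theorem first_stage_weight_identifies_complier_share_general
    {Ω : Type*} [MeasurableSpace Ω] [StandardBorelSpace Ω]
    (P : Measure Ω) [IsProbabilityMeasure P] {k : ℕ}
    (Z T0 T1 T : Ω → ℝ) (X : Ω → Fin k → ℝ)
    (hZ : Measurable Z) (hT0 : Measurable T0) (hT1 : Measurable T1) (hX : Measurable X)
    (hZbin : ∀ ω, Z ω = 0 ∨ Z ω = 1)
    (hT0bin : ∀ ω, T0 ω = 0 ∨ T0 ω = 1) (hT1bin : ∀ ω, T1 ω = 0 ∨ T1 ω = 1)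
    (hTdef : ∀ ω, T ω = Z ω * T1 ω + (1 - Z ω) * T0 ω)
    (hci : CondIndepFun (MeasurableSpace.comap X inferInstance)
        (measurable_iff_comap_le.mp hX) (fun ω => (T0 ω, T1 ω)) Z P)
    (e : Ω → ℝ) (he : e =ᵐ[P] P[Z | MeasurableSpace.comap X inferInstance])
    (ε : ℝ) (hε : 0 < ε)
    (hoverlap : ∀ᵐ ω ∂P, ε ≤ e ω ∧ e ω ≤ 1 - ε)
    (hmono : ∀ᵐ ω ∂P, T0 ω ≤ T1 ω) :
    ∫ ω, (Z ω * T ω / e ω - (1 - Z ω) * T ω / (1 - e ω)) ∂P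
      = (P {ω | T0 ω < T1 ω}).toReal := by
  have hZ1bin : ∀ ω, 1 - Z ω = 0 ∨ 1 - Z ω = 1 := fun ω => by
    rcases hZbin ω with h | h <;> simp [h]
  have hci1 : CondIndepFun _ _ T1 Z P := hci.comp measurable_snd measurable_id
  have hci0 : CondIndepFun _ _ T0 (fun ω => 1 - Z ω) P :=
    hci.comp measurable_fst (measurable_id.const_sub 1)
  have he1 : (fun ω => 1 - e ω)
      =ᵐ[P] P[fun ω => 1 - Z ω | MeasurableSpace.comap X inferInstance] := by
    filter_upwards [he, condExp_const_sub (measurable_iff_comap_le.mp hX) 1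
      (integrable_of_zero_or_one (μ := P) hZ hZbin)] with ω he hsub
    rw [he, hsub]
  have hε_e : ∀ᵐ ω ∂P, ε ≤ e ω := hoverlap.mono fun _ h => h.1
  have hε_e1 : ∀ᵐ ω ∂P, ε ≤ 1 - e ω := hoverlap.mono fun _ h => by linarith [h.2]
  have hT_treated : ∀ ω, Z ω * T ω = Z ω * T1 ω := fun ω => by
    rcases hZbin ω with h | h <;> simp [hTdef, h]
  have hT_untreated : ∀ ω, (1 - Z ω) * T ω = (1 - Z ω) * T0 ω := fun ω => by
    rcases hZbin ω with h | h <;> simp [hTdef, h]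
  have hZ1 : Measurable fun ω => 1 - Z ω := measurable_const.sub hZ
  simp only [hT_treated, hT_untreated]
  rw [integral_sub (integrable_mul_div_of_zero_or_one hT1 hZ hT1bin hZbin he hε hε_e)
      (integrable_mul_div_of_zero_or_one hT0 hZ1 hT0bin hZ1bin he1 hε hε_e1),
    integral_mul_div_condExp_eq_of_condIndepFun hci1 hT1 hZ hT1bin hZbin he hε hε_e,
    integral_mul_div_condExp_eq_of_condIndepFun hci0 hT0 hZ1 hT0bin hZ1bin he1 hε hε_e1]
  exact integral_sub_integral_eq_measureReal_lt hT0 hT1 hT0bin hT1bin hmono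

/-- Under the LTE assumptions — `(T₀, T₁) ⫫ Z | σ(X)`, overlap
(`ε ≤ e ≤ 1 − ε` a.s. for some `ε > 0`, `e` a version of `E[Z | σ(X)]`), and monotonicity
`T₀ ≤ T₁` a.s. — with realized treatment `T = Z·T₁ + (1−Z)·T₀`, the first-stage weight
identifies the proportion of compliers:
`E[Z·T/e − (1−Z)·T/(1−e)] = P(T₁ > T₀)`. -/
theorem first_stage_weight_identifies_complier_share
    {Ω : Type*} [MeasurableSpace Ω] [StandardBorelSpace Ω] [Nonempty Ω]
    (P : Measure Ω) [IsProbabilityMeasure P] {k : ℕ}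
    (Z T0 T1 T : Ω → ℝ) (X : Ω → Fin k → ℝ)
    (hZ : Measurable Z) (hT0 : Measurable T0) (hT1 : Measurable T1) (hX : Measurable X)
    (hZbin : ∀ ω, Z ω = 0 ∨ Z ω = 1)
    (hT0bin : ∀ ω, T0 ω = 0 ∨ T0 ω = 1) (hT1bin : ∀ ω, T1 ω = 0 ∨ T1 ω = 1)
    (hTdef : ∀ ω, T ω = Z ω * T1 ω + (1 - Z ω) * T0 ω)
    (hci : CondIndepFun (MeasurableSpace.comap X inferInstance)
        (measurable_iff_comap_le.mp hX) (fun ω => (T0 ω, T1 ω)) Z P)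
    (e : Ω → ℝ) (he : e =ᵐ[P] P[Z | MeasurableSpace.comap X inferInstance])
    (ε : ℝ) (hε : 0 < ε)
    (hoverlap : ∀ᵐ ω ∂P, ε ≤ e ω ∧ e ω ≤ 1 - ε)
    (hmono : ∀ᵐ ω ∂P, T0 ω ≤ T1 ω) :
    ∫ ω, (Z ω * T ω / e ω - (1 - Z ω) * T ω / (1 - e ω)) ∂P
      = (P {ω | T0 ω < T1 ω}).toReal :=
  first_stage_weight_identifies_complier_share_general P Z T0 T1 T X hZ hT0 hT1 hX hZbin hT0bin
    hT1bin hTdef hci e he ε hε hoverlap hmono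
end

section
/- Under the LTE assumptions, with Y₁ integrable, the weighted contrast identifies the complier mean of the treated potential outcome: E[T·Z·Y/e] − E[T·(1−Z)·Y/(1−e)] = ℙ(T₁ > T₀)·E[Y₁ | T₁ > T₀]. In particular, if also ℙ(T₁ > T₀) > 0, dividing by κ₁(e) = ℙ(T₁ > T₀) identifies E[Y₁ | T₁ > T₀]. (This is the identification of E[Y₁^c] in equation (6) of Example 2.2.) -/
open MeasureTheory ProbabilityTheory Set
open scoped ENNReal

/-! Reweighting `P` by `Z / e` gives a measure that agrees with `P` on `σ(Y₀, Y₁, T₀, T₁)`: for `D`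
in that σ-algebra, conditional independence given `X` yields
`E[1_D Z / e] = E[E[1_D | X] E[Z | X] / e] = P D`. As `T Z Y = Z T₁ Y₁`, the first term of the
contrast is `E[T₁ Y₁]`; symmetrically (with `1 - Z`) the second is `E[T₀ Y₁]`, and by monotonicity
`T₁ - T₀` is the indicator of the compliers `{T₀ < T₁}`. -/

section InverseProbabilityWeighting

noncomputable def inverseProbWeight {Ω : Type*} [MeasurableSpace Ω] (P : Measure Ω)
    (m' : MeasurableSpace Ω) (B : Set Ω) : Ω → ℝ :=
  B.indicator fun ω => ((P⟦B | m'⟧) ω)⁻¹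

variable {Ω : Type*} {m' mV mB : MeasurableSpace Ω} [mΩ : MeasurableSpace Ω] {P : Measure Ω}
  {B : Set Ω} {ε : ℝ}

lemma ae_norm_inv_condExp_le (hε : 0 < ε) (hBε : ∀ᵐ ω ∂P, ε ≤ (P⟦B | m'⟧) ω) :
    ∀ᵐ ω ∂P, ‖((P⟦B | m'⟧) ω)⁻¹‖ ≤ ε⁻¹ := by
  filter_upwards [hBε] with ω hω
  rw [norm_inv, Real.norm_of_nonneg (hε.le.trans hω)]
  exact inv_anti₀ hε hω

lemma inverseProbWeight_nonneg_ae (hε : 0 < ε) (hBε : ∀ᵐ ω ∂P, ε ≤ (P⟦B | m'⟧) ω) :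
    0 ≤ᵐ[P] inverseProbWeight P m' B := by
  filter_upwards [hBε] with ω hω
  exact indicator_nonneg (fun _ _ => inv_nonneg.mpr (hε.le.trans hω)) ω

lemma measurable_inverseProbWeight (hm' : m' ≤ mΩ) (hB : MeasurableSet B) :
    Measurable (inverseProbWeight P m' B) :=
  (stronglyMeasurable_condExp.mono hm').measurable.inv.indicator hB

variable [IsFiniteMeasure P]

lemma integrable_inverseProbWeight (hm' : m' ≤ mΩ) (hB : MeasurableSet B) (hε : 0 < ε)
    (hBε : ∀ᵐ ω ∂P, ε ≤ (P⟦B | m'⟧) ω) : Integrable (inverseProbWeight P m' B) P :=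
  Integrable.of_bound (measurable_inverseProbWeight hm' hB).aestronglyMeasurable ε⁻¹ <| by
    filter_upwards [ae_norm_inv_condExp_le hε hBε] with ω hω
    exact (norm_indicator_le_norm_self _ ω).trans hω

lemma integral_indicator_inter_inv_condExp (hm' : m' ≤ mΩ) {D : Set Ω} (hD : MeasurableSet D)
    (hB : MeasurableSet B) (hDB : P⟦D ∩ B | m'⟧ =ᵐ[P] P⟦D | m'⟧ * P⟦B | m'⟧) (hε : 0 < ε)
    (hBε : ∀ᵐ ω ∂P, ε ≤ (P⟦B | m'⟧) ω) :
    ∫ ω, (D ∩ B).indicator (fun ω => ((P⟦B | m'⟧) ω)⁻¹) ω ∂P = P.real D := by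
  have hw : StronglyMeasurable[m'] (P⟦B | m'⟧)⁻¹ :=
    stronglyMeasurable_condExp.measurable.inv.stronglyMeasurable
  have hind : Integrable ((D ∩ B).indicator fun _ => (1 : ℝ)) P :=
    (integrable_const 1).indicator (hD.inter hB)
  have hprod : Integrable ((P⟦B | m'⟧)⁻¹ * (D ∩ B).indicator fun _ => (1 : ℝ)) P :=
    hind.bdd_mul (hw.mono hm').aestronglyMeasurable (ae_norm_inv_condExp_le hε hBε)
  calc ∫ ω, (D ∩ B).indicator (fun ω => ((P⟦B | m'⟧) ω)⁻¹) ω ∂P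
      = ∫ ω, P[(P⟦B | m'⟧)⁻¹ * (D ∩ B).indicator fun _ => (1 : ℝ) | m'] ω ∂P := by
        rw [integral_condExp hm']
        congr 1 with ω
        by_cases h : ω ∈ D ∩ B <;> simp [h]
    _ = ∫ ω, (P⟦D | m'⟧) ω ∂P := by
        refine integral_congr_ae ?_
        filter_upwards [condExp_mul_of_stronglyMeasurable_left hw hprod hind, hDB, hBε]
          with ω h h' hω
        rw [h, Pi.mul_apply, h', Pi.mul_apply, Pi.inv_apply, mul_left_comm,
          inv_mul_cancel₀ (hε.trans_le hω).ne', mul_one]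
    _ = P.real D := by
        rw [integral_condExp hm']
        exact integral_indicator_one hD

variable [StandardBorelSpace Ω]

lemma withDensity_inverseProbWeight_apply (hm' : m' ≤ mΩ) (hmV : mV ≤ mΩ) (hmB : mB ≤ mΩ)
    (hci : CondIndep m' mV mB hm' P) (hB : MeasurableSet[mB] B) (hε : 0 < ε)
    (hBε : ∀ᵐ ω ∂P, ε ≤ (P⟦B | m'⟧) ω) {D : Set Ω} (hD : MeasurableSet[mV] D) :
    P.withDensity (fun ω => ENNReal.ofReal (inverseProbWeight P m' B ω)) D = P D := by
  have hDB := (condIndep_iff m' mV mB hm' hmV hmB P).mp hci D B hD hB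
  rw [withDensity_apply _ (hmV _ hD), ← ofReal_integral_eq_lintegral_ofReal
      (integrable_inverseProbWeight hm' (hmB _ hB) hε hBε).restrict
      (ae_restrict_of_ae (inverseProbWeight_nonneg_ae hε hBε)),
    inverseProbWeight, setIntegral_indicator (hmB _ hB),
    ← integral_indicator ((hmV _ hD).inter (hmB _ hB)),
    integral_indicator_inter_inv_condExp hm' (hmV _ hD) (hmB _ hB) hDB hε hBε,
    ofReal_measureReal]

theorem integral_inverseProbWeight_mul (hm' : m' ≤ mΩ) (hmV : mV ≤ mΩ) (hmB : mB ≤ mΩ)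
    (hci : CondIndep m' mV mB hm' P) (hB : MeasurableSet[mB] B) (hε : 0 < ε)
    (hBε : ∀ᵐ ω ∂P, ε ≤ (P⟦B | m'⟧) ω) {g : Ω → ℝ} (hg : StronglyMeasurable[mV] g) :
    ∫ ω, inverseProbWeight P m' B ω * g ω ∂P = ∫ ω, g ω ∂P := by
  set ν := P.withDensity fun ω => ENNReal.ofReal (inverseProbWeight P m' B ω)
  have htrim : ν.trim hmV = P.trim hmV := @Measure.ext _ mV _ _ fun D hD => by
    rw [trim_measurableSet_eq hmV hD, trim_measurableSet_eq hmV hD,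
      withDensity_inverseProbWeight_apply hm' hmV hmB hci hB hε hBε hD]
  calc ∫ ω, inverseProbWeight P m' B ω * g ω ∂P = ∫ ω, g ω ∂ν := by
        rw [integral_withDensity_eq_integral_toReal_smul
          (measurable_inverseProbWeight hm' (hmB _ hB)).ennreal_ofReal
          (ae_of_all _ fun _ => ENNReal.ofReal_lt_top)]
        refine integral_congr_ae ?_
        filter_upwards [inverseProbWeight_nonneg_ae hε hBε] with ω hω
        rw [ENNReal.toReal_ofReal hω, smul_eq_mul]
    _ = ∫ ω, g ω ∂P := by rw [integral_trim hmV hg, htrim, ← integral_trim hmV hg]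

theorem integral_mul_div_eq_integral_of_condIndep (hm' : m' ≤ mΩ) (hmV : mV ≤ mΩ)
    {Z e g : Ω → ℝ} (hZ : Measurable Z) (hZbin : ∀ ω, Z ω = 0 ∨ Z ω = 1)
    (hci : CondIndep m' mV (MeasurableSpace.comap Z inferInstance) hm' P)
    (he : e =ᵐ[P] P[Z | m']) (hε : 0 < ε) (he_ge : ∀ᵐ ω ∂P, ε ≤ e ω)
    (hg : StronglyMeasurable[mV] g) :
    ∫ ω, Z ω * g ω / e ω ∂P = ∫ ω, g ω ∂P := by
  have hZB : (Z ⁻¹' {1}).indicator (fun _ => (1 : ℝ)) = Z := by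
    ext ω
    rcases hZbin ω with h | h <;> simp [h]
  have hBe : P⟦Z ⁻¹' {1} | m'⟧ =ᵐ[P] e := by
    rw [hZB]
    exact he.symm
  have hBε : ∀ᵐ ω ∂P, ε ≤ (P⟦Z ⁻¹' {1} | m'⟧) ω := by
    filter_upwards [hBe, he_ge] with ω h h' using h ▸ h'
  rw [← integral_inverseProbWeight_mul hm' hmV hZ.comap_le hci
    ⟨{1}, measurableSet_singleton 1, rfl⟩ hε hBε hg]
  refine integral_congr_ae ?_
  filter_upwards [hBe] with ω hω
  rcases hZbin ω with h | h <;> simp [inverseProbWeight, h, hω, div_eq_inv_mul]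

theorem integral_one_sub_mul_div_one_sub_eq_integral_of_condIndep (hm' : m' ≤ mΩ)
    (hmV : mV ≤ mΩ) {Z e g : Ω → ℝ} (hZ : Measurable Z) (hZbin : ∀ ω, Z ω = 0 ∨ Z ω = 1)
    (hci : CondIndep m' mV (MeasurableSpace.comap Z inferInstance) hm' P)
    (he : e =ᵐ[P] P[Z | m']) (hε : 0 < ε) (he_le : ∀ᵐ ω ∂P, e ω ≤ 1 - ε)
    (hg : StronglyMeasurable[mV] g) :
    ∫ ω, (1 - Z ω) * g ω / (1 - e ω) ∂P = ∫ ω, g ω ∂P := by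
  have hZint : Integrable Z P := Integrable.of_bound hZ.aestronglyMeasurable 1 <|
    ae_of_all _ fun ω => by rcases hZbin ω with h | h <;> simp [h]
  have he' : (fun ω => 1 - e ω) =ᵐ[P] P[fun ω => 1 - Z ω | m'] := by
    filter_upwards [condExp_sub (integrable_const 1) hZint m', he] with ω h h'
    simp only [Pi.sub_apply] at h
    rw [show (fun ω => 1 - Z ω) = (fun _ => (1 : ℝ)) - Z from rfl, h, condExp_const hm', h']
  refine integral_mul_div_eq_integral_of_condIndep hm' hmV (measurable_const.sub hZ)
    (fun ω => by rcases hZbin ω with h | h <;> simp [h])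
    (condIndep_of_condIndep_of_le_right hci
      (measurable_const.sub (comap_measurable Z)).comap_le) he' hε ?_ hg
  filter_upwards [he_le] with ω h
  linarith

end InverseProbabilityWeighting

theorem integral_mul_sub_integral_mul_eq_setIntegral {Ω : Type*} [MeasurableSpace Ω]
    {P : Measure Ω} {T0 T1 Y : Ω → ℝ} (hT0 : Measurable T0) (hT1 : Measurable T1)
    (hT0bin : ∀ ω, T0 ω = 0 ∨ T0 ω = 1) (hT1bin : ∀ ω, T1 ω = 0 ∨ T1 ω = 1)
    (hY : Integrable Y P) (hmono : ∀ᵐ ω ∂P, T0 ω ≤ T1 ω) :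
    ∫ ω, T1 ω * Y ω ∂P - ∫ ω, T0 ω * Y ω ∂P = ∫ ω in {ω | T0 ω < T1 ω}, Y ω ∂P := by
  have hbdd {T : Ω → ℝ} (hT : Measurable T) (hTbin : ∀ ω, T ω = 0 ∨ T ω = 1) :
      Integrable (fun ω => T ω * Y ω) P :=
    hY.bdd_mul (c := 1) hT.aestronglyMeasurable <|
      ae_of_all _ fun ω => by rcases hTbin ω with h | h <;> simp [h]
  rw [← integral_sub (hbdd hT1 hT1bin) (hbdd hT0 hT0bin),
    ← integral_indicator (measurableSet_lt hT0 hT1)]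
  refine integral_congr_ae ?_
  filter_upwards [hmono] with ω hω
  rcases hT0bin ω with h0 | h0 <;> rcases hT1bin ω with h1 | h1
  · simp [h0, h1]
  · simp [h0, h1]
  · norm_num [h0, h1] at hω
  · simp [h0, h1]

theorem measureReal_mul_integral_cond {Ω : Type*} [MeasurableSpace Ω] {P : Measure Ω}
    {A : Set Ω} (hA : P A ≠ ∞) (f : Ω → ℝ) :
    P.real A * ∫ ω, f ω ∂P[|A] = ∫ ω in A, f ω ∂P := by
  rw [ProbabilityTheory.cond, integral_smul_measure, smul_eq_mul, ENNReal.toReal_inv, ← mul_assoc]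
  by_cases hA0 : P A = 0
  · simp [Measure.restrict_eq_zero.mpr hA0]
  · rw [measureReal_def, mul_inv_cancel₀ (ENNReal.toReal_ne_zero.mpr ⟨hA0, hA⟩), one_mul]

lemma mul_mul_eq_of_binary {z t0 t1 t y0 y1 y : ℝ} (hz : z = 0 ∨ z = 1)
    (ht1 : t1 = 0 ∨ t1 = 1) (ht : t = z * t1 + (1 - z) * t0) (hy : y = t * y1 + (1 - t) * y0) :
    t * z * y = z * (t1 * y1) := by
  subst ht hy
  rcases hz with rfl | rfl <;> rcases ht1 with rfl | rfl <;> ring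

theorem weighted_contrast_identifies_complier_mean_general
    {Ω : Type*} [MeasurableSpace Ω] [StandardBorelSpace Ω]
    (P : Measure Ω) [IsProbabilityMeasure P] {k : ℕ}
    (Y0 Y1 Z T0 T1 T Y : Ω → ℝ) (X : Ω → Fin k → ℝ)
    (hY0 : Measurable Y0) (hY1 : Measurable Y1) (hZ : Measurable Z)
    (hT0 : Measurable T0) (hT1 : Measurable T1) (hX : Measurable X)
    (hZbin : ∀ ω, Z ω = 0 ∨ Z ω = 1)
    (hT0bin : ∀ ω, T0 ω = 0 ∨ T0 ω = 1) (hT1bin : ∀ ω, T1 ω = 0 ∨ T1 ω = 1)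
    (hTdef : ∀ ω, T ω = Z ω * T1 ω + (1 - Z ω) * T0 ω)
    (hYdef : ∀ ω, Y ω = T ω * Y1 ω + (1 - T ω) * Y0 ω)
    (hIY1 : Integrable Y1 P)
    (hci : CondIndepFun (MeasurableSpace.comap X inferInstance)
        (measurable_iff_comap_le.mp hX) (fun ω => (Y0 ω, Y1 ω, T0 ω, T1 ω)) Z P)
    (e : Ω → ℝ) (he : e =ᵐ[P] P[Z | MeasurableSpace.comap X inferInstance])
    (ε : ℝ) (hε : 0 < ε)
    (hoverlap : ∀ᵐ ω ∂P, ε ≤ e ω ∧ e ω ≤ 1 - ε)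
    (hmono : ∀ᵐ ω ∂P, T0 ω ≤ T1 ω) :
    (∫ ω, T ω * Z ω * Y ω / e ω ∂P - ∫ ω, T ω * (1 - Z ω) * Y ω / (1 - e ω) ∂P
        = (P {ω | T0 ω < T1 ω}).toReal
            * ∫ ω, Y1 ω ∂(P[|{ω | T0 ω < T1 ω}])) ∧
    (0 < P {ω | T0 ω < T1 ω} →
      (∫ ω, T ω * Z ω * Y ω / e ω ∂P - ∫ ω, T ω * (1 - Z ω) * Y ω / (1 - e ω) ∂P)
          / (P {ω | T0 ω < T1 ω}).toReal
        = ∫ ω, Y1 ω ∂(P[|{ω | T0 ω < T1 ω}])) := by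
  set V := fun ω => (Y0 ω, Y1 ω, T0 ω, T1 ω)
  have hmV : MeasurableSpace.comap V inferInstance ≤ ‹MeasurableSpace Ω› :=
    (by fun_prop : Measurable V).comap_le
  have hVσ : Measurable[MeasurableSpace.comap V inferInstance] V := comap_measurable V
  have hci' := (condIndepFun_iff_condIndep _ _ V Z P).mp hci
  have htreated : ∫ ω, T ω * Z ω * Y ω / e ω ∂P = ∫ ω, T1 ω * Y1 ω ∂P := by
    simp only [fun ω => mul_mul_eq_of_binary (hZbin ω) (hT1bin ω) (hTdef ω) (hYdef ω)]
    exact integral_mul_div_eq_integral_of_condIndep _ hmV hZ hZbin hci' he hε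
      (hoverlap.mono fun _ h => h.1) (hVσ.snd.snd.snd.mul hVσ.snd.fst).stronglyMeasurable
  have huntreated : ∫ ω, T ω * (1 - Z ω) * Y ω / (1 - e ω) ∂P = ∫ ω, T0 ω * Y1 ω ∂P := by
    have hZ' (ω : Ω) : 1 - Z ω = 0 ∨ 1 - Z ω = 1 := by rcases hZbin ω with h | h <;> simp [h]
    have hT' (ω : Ω) : T ω = (1 - Z ω) * T0 ω + (1 - (1 - Z ω)) * T1 ω := by rw [hTdef]; ring
    simp only [fun ω => mul_mul_eq_of_binary (hZ' ω) (hT0bin ω) (hT' ω) (hYdef ω)]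
    exact integral_one_sub_mul_div_one_sub_eq_integral_of_condIndep _ hmV hZ hZbin hci' he hε
      (hoverlap.mono fun _ h => h.2) (hVσ.snd.snd.fst.mul hVσ.snd.fst).stronglyMeasurable
  have hcontrast : ∫ ω, T ω * Z ω * Y ω / e ω ∂P - ∫ ω, T ω * (1 - Z ω) * Y ω / (1 - e ω) ∂P
      = P.real {ω | T0 ω < T1 ω} * ∫ ω, Y1 ω ∂(P[|{ω | T0 ω < T1 ω}]) := by
    rw [htreated, huntreated, measureReal_mul_integral_cond (measure_ne_top P _),
      integral_mul_sub_integral_mul_eq_setIntegral hT0 hT1 hT0bin hT1bin hIY1 hmono]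
  refine ⟨hcontrast, fun hpos => ?_⟩
  rw [hcontrast, measureReal_def,
    mul_div_cancel_left₀ _ (ENNReal.toReal_ne_zero.mpr ⟨hpos.ne', measure_ne_top P _⟩)]

/-- Under the LTE assumptions — `(Y₀, Y₁, T₀, T₁) ⫫ Z | σ(X)`, overlap
(`ε ≤ e ≤ 1 − ε` a.s. for some `ε > 0`, `e` a version of `E[Z | σ(X)]`), and monotonicity
`T₀ ≤ T₁` a.s. — with `T = Z·T₁ + (1−Z)·T₀`, `Y = T·Y₁ + (1−T)·Y₀`, and `Y₁` integrable,
the weighted contrast identifies the complier mean of the treated potential outcome: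
`E[T·Z·Y/e] − E[T·(1−Z)·Y/(1−e)] = P(T₁ > T₀)·E[Y₁ | T₁ > T₀]`; in particular, if
`P(T₁ > T₀) > 0`, dividing by `κ₁(e) = P(T₁ > T₀)` identifies `E[Y₁ | T₁ > T₀]`. -/
theorem weighted_contrast_identifies_complier_mean
    {Ω : Type*} [MeasurableSpace Ω] [StandardBorelSpace Ω] [Nonempty Ω]
    (P : Measure Ω) [IsProbabilityMeasure P] {k : ℕ}
    (Y0 Y1 Z T0 T1 T Y : Ω → ℝ) (X : Ω → Fin k → ℝ)
    (hY0 : Measurable Y0) (hY1 : Measurable Y1) (hZ : Measurable Z)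
    (hT0 : Measurable T0) (hT1 : Measurable T1) (hX : Measurable X)
    (hZbin : ∀ ω, Z ω = 0 ∨ Z ω = 1)
    (hT0bin : ∀ ω, T0 ω = 0 ∨ T0 ω = 1) (hT1bin : ∀ ω, T1 ω = 0 ∨ T1 ω = 1)
    (hTdef : ∀ ω, T ω = Z ω * T1 ω + (1 - Z ω) * T0 ω)
    (hYdef : ∀ ω, Y ω = T ω * Y1 ω + (1 - T ω) * Y0 ω)
    (hIY1 : Integrable Y1 P)
    (hci : CondIndepFun (MeasurableSpace.comap X inferInstance)
        (measurable_iff_comap_le.mp hX) (fun ω => (Y0 ω, Y1 ω, T0 ω, T1 ω)) Z P)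
    (e : Ω → ℝ) (he : e =ᵐ[P] P[Z | MeasurableSpace.comap X inferInstance])
    (ε : ℝ) (hε : 0 < ε)
    (hoverlap : ∀ᵐ ω ∂P, ε ≤ e ω ∧ e ω ≤ 1 - ε)
    (hmono : ∀ᵐ ω ∂P, T0 ω ≤ T1 ω) :
    (∫ ω, T ω * Z ω * Y ω / e ω ∂P - ∫ ω, T ω * (1 - Z ω) * Y ω / (1 - e ω) ∂P
        = (P {ω | T0 ω < T1 ω}).toReal
            * ∫ ω, Y1 ω ∂(P[|{ω | T0 ω < T1 ω}])) ∧
    (0 < P {ω | T0 ω < T1 ω} →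
      (∫ ω, T ω * Z ω * Y ω / e ω ∂P - ∫ ω, T ω * (1 - Z ω) * Y ω / (1 - e ω) ∂P)
          / (P {ω | T0 ω < T1 ω}).toReal
        = ∫ ω, Y1 ω ∂(P[|{ω | T0 ω < T1 ω}])) :=
  weighted_contrast_identifies_complier_mean_general P Y0 Y1 Z T0 T1 T Y X hY0 hY1 hZ hT0 hT1 hX
    hZbin hT0bin hT1bin hTdef hYdef hIY1 hci e he ε hε hoverlap hmono
end

section
/- Under the LTE assumptions, the weighted contrast identifies the complier distribution function of the treated potential outcome: for every y ∈ ℝ, E[T·Z·1{Y ≤ y}/e] − E[T·(1−Z)·1{Y ≤ y}/(1−e)] = ℙ(T₁ > T₀)·ℙ(Y₁ ≤ y | T₁ > T₀). (This is the identification of F_{Y₁^c}(y) in equation (7) of Example 2.2.) -/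
open MeasureTheory ProbabilityTheory Set

/-!
Let `m = σ(X)`. On `{Z = 1}` the realized treatment is `T₁`, and the realized outcome of a treated
unit is `Y₁`, so `T·Z·1{Y ≤ y} = Z·1{T₁ = 1, Y₁ ≤ y}`; likewise
`T·(1 − Z)·1{Y ≤ y} = (1 − Z)·1{T₀ = 1, Y₁ ≤ y}`. For an event `A` of the potential outcomes,
conditional independence gives `E[Z·1_A | m] = e·P(A | m)`, so weighting by `1 / e` (bounded by
overlap) recovers `P(A)`; the same holds for `1 − Z` and `1 − e`. The contrast is therefore
`P(T₁ = 1, Y₁ ≤ y) − P(T₀ = 1, Y₁ ≤ y)`, which by monotonicity is the mass of the compliers with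
`Y₁ ≤ y`.
-/

section InverseWeighting

variable {Ω : Type*} {m mΩ : MeasurableSpace Ω} {P : Measure Ω} [IsFiniteMeasure P]

theorem integral_indicator_inter_div_eq_measureReal (hm : m ≤ mΩ) {A B : Set Ω}
    (hA : MeasurableSet A) (hB : MeasurableSet B) {p : Ω → ℝ} (hp : StronglyMeasurable[m] p)
    {ε : ℝ} (hε : 0 < ε) (hpε : ∀ᵐ ω ∂P, ε ≤ p ω)
    (hAB : P⟦A ∩ B | m⟧ =ᵐ[P] fun ω => (P⟦A | m⟧) ω * p ω) :
    ∫ ω, (A ∩ B).indicator 1 ω / p ω ∂P = P.real A := by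
  have hind : Integrable ((A ∩ B).indicator fun _ => (1 : ℝ)) P :=
    (integrable_const 1).indicator (hA.inter hB)
  have hp_inv : StronglyMeasurable[m] p⁻¹ := hp.measurable.inv.stronglyMeasurable
  have hweighted : Integrable (fun ω => (p ω)⁻¹ * (A ∩ B).indicator (fun _ => (1 : ℝ)) ω) P :=
    hind.bdd_mul (hp_inv.mono hm).aestronglyMeasurable (c := ε⁻¹) <| hpε.mono fun ω hω => by
      rw [Real.norm_of_nonneg (inv_nonneg.2 (hε.le.trans hω))]
      exact inv_anti₀ hε hω
  have hpull := condExp_mul_of_stronglyMeasurable_left hp_inv hweighted hind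
  calc ∫ ω, (A ∩ B).indicator 1 ω / p ω ∂P
      = ∫ ω, (p ω)⁻¹ * (A ∩ B).indicator (fun _ => (1 : ℝ)) ω ∂P := by
        simp only [div_eq_inv_mul]; rfl
    _ = ∫ ω, (p⁻¹ * P⟦A ∩ B | m⟧) ω ∂P := by
        rw [← integral_condExp hm]
        exact integral_congr_ae hpull
    _ = ∫ ω, (P⟦A | m⟧) ω ∂P := by
        refine integral_congr_ae ?_
        filter_upwards [hAB, hpε] with ω hωAB hω
        rw [Pi.mul_apply, hωAB, Pi.inv_apply, mul_left_comm,
          inv_mul_cancel₀ (hε.trans_le hω).ne', mul_one]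
    _ = P.real A := (integral_condExp hm).trans (integral_indicator_one hA)

variable [StandardBorelSpace Ω] {hm : m ≤ mΩ} {β : Type*} [MeasurableSpace β] {f : Ω → β}
  {Z e : Ω → ℝ} {ε : ℝ} {s : Set β}

theorem CondIndepFun.integral_mul_indicator_div_eq_measureReal (hfZ : CondIndepFun m hm f Z P)
    (hf : Measurable f) (hZ : Measurable Z) (hZbin : ∀ ω, Z ω = 0 ∨ Z ω = 1)
    (he : e =ᵐ[P] P[Z | m]) (hε : 0 < ε) (heε : ∀ᵐ ω ∂P, ε ≤ e ω) (hs : MeasurableSet s) :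
    ∫ ω, Z ω * (f ⁻¹' s).indicator 1 ω / e ω ∂P = P.real (f ⁻¹' s) := by
  have hZ_eq : (Z ⁻¹' {1}).indicator (fun _ => (1 : ℝ)) = Z := by
    ext ω
    rcases hZbin ω with h | h <;> simp [h]
  have hprod := (condIndepFun_iff_condExp_inter_preimage_eq_mul hf hZ).1 hfZ s {1} hs
    (measurableSet_singleton 1)
  rw [hZ_eq] at hprod
  have hintegrand : (fun ω => Z ω * (f ⁻¹' s).indicator 1 ω / e ω)
      =ᵐ[P] fun ω => (f ⁻¹' s ∩ Z ⁻¹' {1}).indicator 1 ω / (P[Z | m]) ω := by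
    filter_upwards [he] with ω hω
    rw [hω, inter_indicator_one, Pi.mul_apply, mul_comm]
    congr 2
    exact (congrFun hZ_eq ω).symm
  have hpε : ∀ᵐ ω ∂P, ε ≤ (P[Z | m]) ω := by
    filter_upwards [he, heε] with ω hω hεω
    rwa [← hω]
  rw [integral_congr_ae hintegrand]
  exact integral_indicator_inter_div_eq_measureReal hm (hf hs) (hZ (measurableSet_singleton 1))
    stronglyMeasurable_condExp hε hpε hprod

theorem CondIndepFun.integral_one_sub_mul_indicator_div_eq_measureReal
    (hfZ : CondIndepFun m hm f Z P) (hf : Measurable f) (hZ : Measurable Z)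
    (hZbin : ∀ ω, Z ω = 0 ∨ Z ω = 1) (he : e =ᵐ[P] P[Z | m]) (hε : 0 < ε)
    (heε : ∀ᵐ ω ∂P, ε ≤ 1 - e ω) (hs : MeasurableSet s) :
    ∫ ω, (1 - Z ω) * (f ⁻¹' s).indicator 1 ω / (1 - e ω) ∂P = P.real (f ⁻¹' s) := by
  have hZint : Integrable Z P := Integrable.of_bound hZ.aestronglyMeasurable 1
    (ae_of_all _ fun ω => by rcases hZbin ω with h | h <;> simp [h])
  have he' : (fun ω => 1 - e ω) =ᵐ[P] P[fun ω => 1 - Z ω | m] := by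
    filter_upwards [he, condExp_sub (integrable_const (1 : ℝ)) hZint m] with ω hω hsub
    rw [condExp_const hm] at hsub
    rw [hω]
    exact hsub.symm
  have hZbin' : ∀ ω, 1 - Z ω = 0 ∨ 1 - Z ω = 1 := fun ω => by
    rcases hZbin ω with h | h <;> simp [h]
  exact CondIndepFun.integral_mul_indicator_div_eq_measureReal
    (hfZ.comp measurable_id (measurable_const.sub measurable_id)) hf (measurable_const.sub hZ)
    hZbin' he' hε heε hs

end InverseWeighting

section Compliers

variable {Ω : Type*} {Z T0 T1 T Y0 Y1 Y : Ω → ℝ}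

theorem treatment_mul_instrument_mul_ite_le (hZbin : ∀ ω, Z ω = 0 ∨ Z ω = 1)
    (hT1bin : ∀ ω, T1 ω = 0 ∨ T1 ω = 1) (hTdef : ∀ ω, T ω = Z ω * T1 ω + (1 - Z ω) * T0 ω)
    (hYdef : ∀ ω, Y ω = T ω * Y1 ω + (1 - T ω) * Y0 ω) (y : ℝ) (ω : Ω) :
    T ω * Z ω * (if Y ω ≤ y then (1 : ℝ) else 0)
      = Z ω * ({ω | T1 ω = 1} ∩ {ω | Y1 ω ≤ y}).indicator 1 ω := by
  rcases hZbin ω with hZ | hZ <;> rcases hT1bin ω with hT1 | hT1 <;>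
    simp [indicator_apply, hYdef, hTdef, hZ, hT1]

theorem treatment_mul_one_sub_instrument_mul_ite_le (hZbin : ∀ ω, Z ω = 0 ∨ Z ω = 1)
    (hT0bin : ∀ ω, T0 ω = 0 ∨ T0 ω = 1) (hTdef : ∀ ω, T ω = Z ω * T1 ω + (1 - Z ω) * T0 ω)
    (hYdef : ∀ ω, Y ω = T ω * Y1 ω + (1 - T ω) * Y0 ω) (y : ℝ) (ω : Ω) :
    T ω * (1 - Z ω) * (if Y ω ≤ y then (1 : ℝ) else 0)
      = (1 - Z ω) * ({ω | T0 ω = 1} ∩ {ω | Y1 ω ≤ y}).indicator 1 ω := by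
  rcases hZbin ω with hZ | hZ <;> rcases hT0bin ω with hT0 | hT0 <;>
    simp [indicator_apply, hYdef, hTdef, hZ, hT0]

variable [MeasurableSpace Ω] {P : Measure Ω} [IsFiniteMeasure P]

theorem measureReal_inter_sub_measureReal_inter_eq_of_ae_le (hT0 : Measurable T0)
    (hT0bin : ∀ ω, T0 ω = 0 ∨ T0 ω = 1) (hT1bin : ∀ ω, T1 ω = 0 ∨ T1 ω = 1)
    (hmono : ∀ᵐ ω ∂P, T0 ω ≤ T1 ω) {C : Set Ω} (hC : MeasurableSet C) :
    P.real ({ω | T1 ω = 1} ∩ C) - P.real ({ω | T0 ω = 1} ∩ C)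
      = P.real ({ω | T0 ω < T1 ω} ∩ C) := by
  have hA0 : MeasurableSet ({ω | T0 ω = 1} ∩ C) := (hT0 (measurableSet_singleton 1)).inter hC
  have hinter : (({ω | T1 ω = 1} ∩ C) ∩ ({ω | T0 ω = 1} ∩ C) : Set Ω)
      =ᵐ[P] ({ω | T0 ω = 1} ∩ C : Set Ω) := by
    refine Filter.eventuallyEq_set.2 ?_
    filter_upwards [hmono] with ω hω
    have h01 : T0 ω = 1 → T1 ω = 1 := fun h0 => (hT1bin ω).resolve_left fun h1 => by linarith
    simp only [mem_inter_iff, mem_ofPred_eq]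
    tauto
  have hdiff : ({ω | T1 ω = 1} ∩ C) \ ({ω | T0 ω = 1} ∩ C) = {ω | T0 ω < T1 ω} ∩ C := by
    ext ω
    rcases hT0bin ω with h0 | h0 <;> rcases hT1bin ω with h1 | h1 <;> simp [h0, h1]
  rw [← measureReal_inter_add_sdiff (s := {ω | T1 ω = 1} ∩ C) hA0, measureReal_congr hinter,
    hdiff, add_sub_cancel_left]

theorem measureReal_mul_cond_real_eq_inter {s : Set Ω} (hs : MeasurableSet s) (t : Set Ω) :
    P.real s * (P[|s]).real t = P.real (s ∩ t) := by
  simp only [measureReal_def]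
  rw [← ENNReal.toReal_mul, mul_comm, cond_mul_eq_inter hs]

end Compliers

theorem weighted_contrast_identifies_complier_cdf_general
    {Ω : Type*} [MeasurableSpace Ω] [StandardBorelSpace Ω]
    (P : Measure Ω) [IsProbabilityMeasure P] {k : ℕ}
    (Y0 Y1 Z T0 T1 T Y : Ω → ℝ) (X : Ω → Fin k → ℝ)
    (hY1 : Measurable Y1) (hZ : Measurable Z)
    (hT0 : Measurable T0) (hT1 : Measurable T1) (hX : Measurable X)
    (hZbin : ∀ ω, Z ω = 0 ∨ Z ω = 1)
    (hT0bin : ∀ ω, T0 ω = 0 ∨ T0 ω = 1) (hT1bin : ∀ ω, T1 ω = 0 ∨ T1 ω = 1)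
    (hTdef : ∀ ω, T ω = Z ω * T1 ω + (1 - Z ω) * T0 ω)
    (hYdef : ∀ ω, Y ω = T ω * Y1 ω + (1 - T ω) * Y0 ω)
    (hci : CondIndepFun (MeasurableSpace.comap X inferInstance)
        (measurable_iff_comap_le.mp hX) (fun ω => (Y0 ω, Y1 ω, T0 ω, T1 ω)) Z P)
    (e : Ω → ℝ) (he : e =ᵐ[P] P[Z | MeasurableSpace.comap X inferInstance])
    (ε : ℝ) (hε : 0 < ε)
    (hoverlap : ∀ᵐ ω ∂P, ε ≤ e ω ∧ e ω ≤ 1 - ε)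
    (hmono : ∀ᵐ ω ∂P, T0 ω ≤ T1 ω)
    (y : ℝ) :
    ∫ ω, T ω * Z ω * (if Y ω ≤ y then (1 : ℝ) else 0) / e ω ∂P
      - ∫ ω, T ω * (1 - Z ω) * (if Y ω ≤ y then (1 : ℝ) else 0) / (1 - e ω) ∂P
      = (P {ω | T0 ω < T1 ω}).toReal
          * ((P[|{ω | T0 ω < T1 ω}]) {ω | Y1 ω ≤ y}).toReal := by
  set f : Ω → ℝ × ℝ × ℝ := fun ω => (Y1 ω, T0 ω, T1 ω)
  have hf : Measurable f := hY1.prodMk (hT0.prodMk hT1)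
  have hfZ : CondIndepFun _ _ f Z P := hci.comp measurable_snd measurable_id
  have hs1 : MeasurableSet (Prod.snd ⁻¹' (Prod.snd ⁻¹' {1}) ∩ Prod.fst ⁻¹' Iic y :
      Set (ℝ × ℝ × ℝ)) :=
    (measurable_snd.snd (measurableSet_singleton 1)).inter (measurable_fst measurableSet_Iic)
  have hs0 : MeasurableSet (Prod.snd ⁻¹' (Prod.fst ⁻¹' {1}) ∩ Prod.fst ⁻¹' Iic y :
      Set (ℝ × ℝ × ℝ)) :=
    (measurable_snd.fst (measurableSet_singleton 1)).inter (measurable_fst measurableSet_Iic)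
  calc _ = ∫ ω, Z ω * ({ω | T1 ω = 1} ∩ {ω | Y1 ω ≤ y}).indicator 1 ω / e ω ∂P
        - ∫ ω, (1 - Z ω) * ({ω | T0 ω = 1} ∩ {ω | Y1 ω ≤ y}).indicator 1 ω / (1 - e ω) ∂P := by
        simp only [treatment_mul_instrument_mul_ite_le hZbin hT1bin hTdef hYdef,
          treatment_mul_one_sub_instrument_mul_ite_le hZbin hT0bin hTdef hYdef]
    _ = P.real ({ω | T1 ω = 1} ∩ {ω | Y1 ω ≤ y})
          - P.real ({ω | T0 ω = 1} ∩ {ω | Y1 ω ≤ y}) := by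
        congr 1
        · exact CondIndepFun.integral_mul_indicator_div_eq_measureReal (f := f) hfZ hf hZ hZbin
            he hε (hoverlap.mono fun _ h => h.1) hs1
        · exact CondIndepFun.integral_one_sub_mul_indicator_div_eq_measureReal (f := f) hfZ hf hZ
            hZbin he hε (hoverlap.mono fun _ h => by linarith [h.2]) hs0
    _ = P.real ({ω | T0 ω < T1 ω} ∩ {ω | Y1 ω ≤ y}) :=
        measureReal_inter_sub_measureReal_inter_eq_of_ae_le hT0 hT0bin hT1bin hmono
          (hY1 measurableSet_Iic)
    _ = _ := (measureReal_mul_cond_real_eq_inter (measurableSet_lt hT0 hT1) _).symm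

/-- Under the LTE assumptions — `(Y₀, Y₁, T₀, T₁) ⫫ Z | σ(X)`, overlap
(`ε ≤ e ≤ 1 − ε` a.s. for some `ε > 0`, `e` a version of `E[Z | σ(X)]`), monotonicity
`T₀ ≤ T₁` a.s., and relevance `P(T₁ > T₀) > 0` — with `T = Z·T₁ + (1−Z)·T₀` and
`Y = T·Y₁ + (1−T)·Y₀`, the weighted contrast identifies the complier distribution function
of the treated potential outcome: for every `y`,
`E[T·Z·1{Y ≤ y}/e] − E[T·(1−Z)·1{Y ≤ y}/(1−e)] = P(T₁ > T₀)·P(Y₁ ≤ y | T₁ > T₀)`. -/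
theorem weighted_contrast_identifies_complier_cdf
    {Ω : Type*} [MeasurableSpace Ω] [StandardBorelSpace Ω] [Nonempty Ω]
    (P : Measure Ω) [IsProbabilityMeasure P] {k : ℕ}
    (Y0 Y1 Z T0 T1 T Y : Ω → ℝ) (X : Ω → Fin k → ℝ)
    (hY0 : Measurable Y0) (hY1 : Measurable Y1) (hZ : Measurable Z)
    (hT0 : Measurable T0) (hT1 : Measurable T1) (hX : Measurable X)
    (hZbin : ∀ ω, Z ω = 0 ∨ Z ω = 1)
    (hT0bin : ∀ ω, T0 ω = 0 ∨ T0 ω = 1) (hT1bin : ∀ ω, T1 ω = 0 ∨ T1 ω = 1)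
    (hTdef : ∀ ω, T ω = Z ω * T1 ω + (1 - Z ω) * T0 ω)
    (hYdef : ∀ ω, Y ω = T ω * Y1 ω + (1 - T ω) * Y0 ω)
    (hci : CondIndepFun (MeasurableSpace.comap X inferInstance)
        (measurable_iff_comap_le.mp hX) (fun ω => (Y0 ω, Y1 ω, T0 ω, T1 ω)) Z P)
    (e : Ω → ℝ) (he : e =ᵐ[P] P[Z | MeasurableSpace.comap X inferInstance])
    (ε : ℝ) (hε : 0 < ε)
    (hoverlap : ∀ᵐ ω ∂P, ε ≤ e ω ∧ e ω ≤ 1 - ε)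
    (hmono : ∀ᵐ ω ∂P, T0 ω ≤ T1 ω)
    (hrel : 0 < P {ω | T0 ω < T1 ω})
    (y : ℝ) :
    ∫ ω, T ω * Z ω * (if Y ω ≤ y then (1 : ℝ) else 0) / e ω ∂P
      - ∫ ω, T ω * (1 - Z ω) * (if Y ω ≤ y then (1 : ℝ) else 0) / (1 - e ω) ∂P
      = (P {ω | T0 ω < T1 ω}).toReal
          * ((P[|{ω | T0 ω < T1 ω}]) {ω | Y1 ω ≤ y}).toReal :=
  weighted_contrast_identifies_complier_cdf_general P Y0 Y1 Z T0 T1 T Y X hY1 hZ hT0 hT1 hX hZbin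
    hT0bin hT1bin hTdef hYdef hci e he ε hε hoverlap hmono y
end

section
/- Suppose Y and C are independent, the law of Y is purely atomic with finite support S ⊂ ℝ, and y ∈ ℝ is such that ℙ(Q ≥ s) > 0 for every s ∈ S with s ≤ y. Then the survival function of the latent outcome Y is identified from the joint distribution of the observables (Q, δ): ℙ(Y > y) = ∏_{s ∈ S, s ≤ y} (1 − ℙ(Q = s and Y ≤ C)/ℙ(Q ≥ s)). (This is the full identification content of Proposition 1 in the purely discrete case: the population Kaplan–Meier product recovers the distribution of Y.) -/
open MeasureTheory ProbabilityTheory Set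
open scoped ENNReal

/-- Telescoping product lemma: for a "downward closed within `S`" finset `F` with positive
survival probabilities, `P(Y ∉ F)` equals the telescoping product. -/
private lemma km_aux {Ω : Type*} [MeasurableSpace Ω] (P : Measure Ω) [IsProbabilityMeasure P]
    (Y : Ω → ℝ) (S : Finset ℝ) (hS : ∀ᵐ ω ∂P, Y ω ∈ (S : Set ℝ)) :
    ∀ (n : ℕ) (F : Finset ℝ), F.card = n →
      (∀ s ∈ S, ∀ t ∈ F, s ≤ t → s ∈ F) →
      (∀ s ∈ F, P {ω | s ≤ Y ω} ≠ 0) →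
      P {ω | ∀ s ∈ F, Y ω ≠ s}
        = ∏ s ∈ F, P {ω | s < Y ω} / P {ω | s ≤ Y ω} := by
  intro n
  induction n with
  | zero =>
    intro F hc _ _
    rw [Finset.card_eq_zero.mp hc]
    simp
  | succ n ih =>
    intro F hc hdc hpos
    have hne : F.Nonempty := Finset.card_pos.mp (hc ▸ n.succ_pos)
    set m := F.max' hne with hm
    have hmF : m ∈ F := F.max'_mem hne
    set F' := F.erase m with hF'
    have h1 : P {ω | ∀ s ∈ F, Y ω ≠ s} = P {ω | m < Y ω} := by
      apply measure_congr
      filter_upwards [hS] with ω hω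
      show (∀ s ∈ F, Y ω ≠ s) = (m < Y ω)
      simp only [eq_iff_iff]
      constructor
      · intro h
        by_contra hlt
        push_neg at hlt
        exact h (Y ω) (hdc (Y ω) hω m hmF hlt) rfl
      · intro h s hs hseq
        exact absurd (hseq ▸ h) (not_lt.mpr (F.le_max' s hs))
    have h2 : P {ω | ∀ s ∈ F', Y ω ≠ s} = P {ω | m ≤ Y ω} := by
      apply measure_congr
      filter_upwards [hS] with ω hω
      show (∀ s ∈ F', Y ω ≠ s) = (m ≤ Y ω)
      simp only [eq_iff_iff]
      constructor
      · intro h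
        by_contra hlt
        push_neg at hlt
        have hYF : Y ω ∈ F := hdc (Y ω) hω m hmF hlt.le
        exact h (Y ω) (Finset.mem_erase.mpr ⟨ne_of_lt hlt, hYF⟩) rfl
      · intro h s hs hseq
        have hsF : s ∈ F := Finset.mem_of_mem_erase hs
        have hsm : s < m := lt_of_le_of_ne (F.le_max' s hsF) (Finset.ne_of_mem_erase hs)
        exact absurd (hseq ▸ h) (not_le.mpr hsm)
    have hdc' : ∀ s ∈ S, ∀ t ∈ F', s ≤ t → s ∈ F' := by
      intro s hsS t ht hst
      have htF : t ∈ F := Finset.mem_of_mem_erase ht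
      have htm : t < m := lt_of_le_of_ne (F.le_max' t htF) (Finset.ne_of_mem_erase ht)
      exact Finset.mem_erase.mpr ⟨ne_of_lt (lt_of_le_of_lt hst htm), hdc s hsS t htF hst⟩
    have hcard' : F'.card = n := by
      rw [hF', Finset.card_erase_of_mem hmF, hc]; rfl
    have hpos' : ∀ s ∈ F', P {ω | s ≤ Y ω} ≠ 0 :=
      fun s hs => hpos s (Finset.mem_of_mem_erase hs)
    have hih := ih F' hcard' hdc' hpos'
    rw [h1, ← Finset.mul_prod_erase F _ hmF, ← hF', ← hih, h2,
      ENNReal.div_mul_cancel (hpos m hmF) (measure_ne_top P _)]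

/-- Suppose the latent outcome `Y` and the censoring variable `C` are
independent, the law of `Y` is purely atomic with finite support `S ⊂ ℝ` (`Y ∈ S` a.s.), and
`y` is such that `P(Q ≥ s) > 0` for every `s ∈ S` with `s ≤ y`, where `Q = min(Y, C)`. Then
the survival function of the latent outcome is identified from the joint distribution of the
observables: `P(Y > y) = ∏_{s ∈ S, s ≤ y} (1 − P(Q = s, Y ≤ C)/P(Q ≥ s))` — the population
Kaplan–Meier product recovers the distribution of `Y`. -/
theorem kaplan_meier_identification_discrete
    {Ω : Type*} [MeasurableSpace Ω] (P : Measure Ω) [IsProbabilityMeasure P]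
    (Y C : Ω → ℝ) (hY : Measurable Y) (hC : Measurable C)
    (hindep : IndepFun Y C P)
    (S : Finset ℝ) (hS : ∀ᵐ ω ∂P, Y ω ∈ (S : Set ℝ))
    (y : ℝ) (hy : ∀ s ∈ S, s ≤ y → 0 < P {ω | s ≤ min (Y ω) (C ω)}) :
    P {ω | y < Y ω}
      = ∏ s ∈ S.filter (fun s => s ≤ y),
          (1 - P {ω | min (Y ω) (C ω) = s ∧ Y ω ≤ C ω}
                / P {ω | s ≤ min (Y ω) (C ω)}) := by
  classical
  -- Step 1: rewrite each factor as `P(Y > s) / P(Y ≥ s)` using independence.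
  have hfac : ∀ s ∈ S.filter (fun s => s ≤ y),
      (1 - P {ω | min (Y ω) (C ω) = s ∧ Y ω ≤ C ω} / P {ω | s ≤ min (Y ω) (C ω)})
        = P {ω | s < Y ω} / P {ω | s ≤ Y ω} := by
    intro s hs
    obtain ⟨hsS, hsy⟩ := Finset.mem_filter.mp hs
    have hpos := hy s hsS hsy
    have e1 : {ω | min (Y ω) (C ω) = s ∧ Y ω ≤ C ω} = Y ⁻¹' {s} ∩ C ⁻¹' Ici s := by
      ext ω
      simp only [mem_setOf_eq, mem_inter_iff, mem_preimage, mem_singleton_iff, mem_Ici]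
      constructor
      · rintro ⟨h1, h2⟩
        rw [min_eq_left h2] at h1
        exact ⟨h1, h1 ▸ h2⟩
      · rintro ⟨h1, h2⟩
        subst h1
        exact ⟨min_eq_left h2, h2⟩
    have e2 : {ω | s ≤ min (Y ω) (C ω)} = Y ⁻¹' Ici s ∩ C ⁻¹' Ici s := by
      ext ω
      simp only [mem_setOf_eq, le_min_iff, mem_inter_iff, mem_preimage, mem_Ici]
    have i1 := hindep.measure_inter_preimage_eq_mul {s} (Ici s)
      (measurableSet_singleton s) measurableSet_Ici
    have i2 := hindep.measure_inter_preimage_eq_mul (Ici s) (Ici s)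
      measurableSet_Ici measurableSet_Ici
    rw [e1, e2, i1, i2]
    rw [e2, i2] at hpos
    have hc0 : P (C ⁻¹' Ici s) ≠ 0 := by
      intro h
      rw [h, mul_zero] at hpos
      exact lt_irrefl _ hpos
    have hY0 : P (Y ⁻¹' Ici s) ≠ 0 := by
      intro h
      rw [h, zero_mul] at hpos
      exact lt_irrefl _ hpos
    rw [ENNReal.mul_div_mul_right _ _ hc0 (measure_ne_top P _)]
    -- split `P(Y ≥ s) = P(Y = s) + P(Y > s)`
    have hsplit : P (Y ⁻¹' Ici s) = P (Y ⁻¹' {s}) + P (Y ⁻¹' Ioi s) := by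
      have hIci : (Ici s : Set ℝ) = {s} ∪ Ioi s := by
        ext x
        rw [Set.mem_Ici, Set.mem_union, Set.mem_singleton_iff, Set.mem_Ioi]
        exact ⟨fun h => (eq_or_lt_of_le h).imp Eq.symm id,
          fun h => h.elim (fun h' => h'.ge) le_of_lt⟩
      have hu : Y ⁻¹' Ici s = Y ⁻¹' {s} ∪ Y ⁻¹' Ioi s := by
        rw [← preimage_union, hIci]
      have hdisj : Disjoint (Y ⁻¹' {s}) (Y ⁻¹' Ioi s) := by
        refine Disjoint.preimage Y ?_
        rw [Set.disjoint_left]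
        intro x hx hx'
        rw [mem_singleton_iff] at hx
        subst hx
        exact lt_irrefl _ (mem_Ioi.mp hx')
      rw [hu, measure_union hdisj (hY measurableSet_Ioi)]
    have hd0 : P (Y ⁻¹' {s}) + P (Y ⁻¹' Ioi s) ≠ 0 := hsplit ▸ hY0
    have hdT : P (Y ⁻¹' {s}) + P (Y ⁻¹' Ioi s) ≠ ⊤ :=
      hsplit ▸ measure_ne_top P (Y ⁻¹' Ici s)
    have hsum1 : (1 : ℝ≥0∞)
        = P (Y ⁻¹' Ioi s) / (P (Y ⁻¹' {s}) + P (Y ⁻¹' Ioi s))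
          + P (Y ⁻¹' {s}) / (P (Y ⁻¹' {s}) + P (Y ⁻¹' Ioi s)) := by
      rw [ENNReal.div_add_div_same, add_comm,
        ENNReal.div_self hd0 hdT]
    have key : (1 : ℝ≥0∞) - P (Y ⁻¹' {s}) / (P (Y ⁻¹' {s}) + P (Y ⁻¹' Ioi s))
        = P (Y ⁻¹' Ioi s) / (P (Y ⁻¹' {s}) + P (Y ⁻¹' Ioi s)) :=
      ENNReal.sub_eq_of_eq_add
        ((ENNReal.div_lt_top (measure_ne_top P _) hd0).ne) hsum1
    show (1 : ℝ≥0∞) - P (Y ⁻¹' {s}) / P (Y ⁻¹' Ici s)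
        = P (Y ⁻¹' Ioi s) / P (Y ⁻¹' Ici s)
    rw [hsplit]
    exact key
  rw [Finset.prod_congr rfl hfac]
  -- Step 2: telescoping
  have hdc : ∀ s ∈ S, ∀ t ∈ S.filter (fun s => s ≤ y), s ≤ t → s ∈ S.filter (fun s => s ≤ y) :=
    fun s hsS t ht hst =>
      Finset.mem_filter.mpr ⟨hsS, hst.trans (Finset.mem_filter.mp ht).2⟩
  have hpos' : ∀ s ∈ S.filter (fun s => s ≤ y), P {ω | s ≤ Y ω} ≠ 0 := by
    intro s hs
    obtain ⟨hsS, hsy⟩ := Finset.mem_filter.mp hs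
    have hsub : {ω | s ≤ min (Y ω) (C ω)} ⊆ {ω | s ≤ Y ω} :=
      fun ω (h : s ≤ min (Y ω) (C ω)) => le_trans h (min_le_left _ _)
    exact ((hy s hsS hsy).trans_le (measure_mono hsub)).ne'
  have haux := km_aux P Y S hS (S.filter (fun s => s ≤ y)).card _ rfl hdc hpos'
  rw [← haux]
  apply measure_congr
  filter_upwards [hS] with ω hω
  show (y < Y ω) = (∀ s ∈ S.filter (fun s => s ≤ y), Y ω ≠ s)
  simp only [eq_iff_iff]
  constructor
  · intro h s hs hseq
    exact absurd ((Finset.mem_filter.mp hs).2) (not_le.mpr (hseq ▸ h))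
  · intro h
    by_contra hle
    push_neg at hle
    exact h (Y ω) (Finset.mem_filter.mpr ⟨hω, hle⟩) rfl
end
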